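/- The function h(x) = N(x/2) + (1/(3√(2π)·x))·e^{-x²/8} defined for x > 0 attains its global minimum uniquely at x = 2/√5, and the minimum value is N(1/√5) + (1/12)·√(10/π)·e^{-1/10}. -/

import Mathlib

open Real MeasureTheory

/-- The standard normal cumulative distribution function. -/
noncomputable def stdNormalCDF (x : ℝ) : ℝ :=
  (Real.sqrt (2 * Real.pi))⁻¹ * ∫ v in Set.Iic x, Real.exp (-v ^ 2 / 2)

/-- The function h from the paper. -/
noncomputable def hFun (x : ℝ) : ℝ :=
  stdNormalCDF (x / 2) + 1 / (3 * Real.sqrt (2 * Real.pi) * x) * Real.exp (-x ^ 2 / 8)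

lemma gauss_integrable : Integrable (fun v : ℝ => Real.exp (-v ^ 2 / 2)) := by
  have := integrable_exp_neg_mul_sq (b := (1:ℝ)/2) (by norm_num)
  convert this using 2 with v
  ring_nf

lemma cdf_hasDerivAt (x : ℝ) :
    HasDerivAt stdNormalCDF ((Real.sqrt (2 * Real.pi))⁻¹ * Real.exp (-x ^ 2 / 2)) x := by
  have hg : Continuous fun v : ℝ => Real.exp (-v ^ 2 / 2) := by continuity
  have key : ∀ y : ℝ, stdNormalCDF y =
      (Real.sqrt (2 * Real.pi))⁻¹ *
        ((∫ v in Set.Iic (0:ℝ), Real.exp (-v ^ 2 / 2)) + ∫ v in (0:ℝ)..y, Real.exp (-v ^ 2 / 2)) := by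
    intro y
    unfold stdNormalCDF
    congr 1
    have := intervalIntegral.integral_Iic_sub_Iic (μ := volume)
      (f := fun v : ℝ => Real.exp (-v ^ 2 / 2)) (a := (0:ℝ)) (b := y)
      gauss_integrable.integrableOn gauss_integrable.integrableOn
    linarith [this]
  have h1 : HasDerivAt (fun y => ∫ v in (0:ℝ)..y, Real.exp (-v ^ 2 / 2))
      (Real.exp (-x ^ 2 / 2)) x :=
    intervalIntegral.integral_hasDerivAt_right (hg.intervalIntegrable _ _)
      (hg.stronglyMeasurableAtFilter _ _) (hg.continuousAt)
  have h2 := (h1.const_add (∫ v in Set.Iic (0:ℝ), Real.exp (-v ^ 2 / 2))).const_mul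
      (Real.sqrt (2 * Real.pi))⁻¹
  refine HasDerivAt.congr_of_eventuallyEq ?_ (Filter.Eventually.of_forall key)
  convert h2 using 1

lemma hFun_hasDerivAt (x : ℝ) (hx : x ≠ 0) :
    HasDerivAt hFun
      (Real.exp (-x ^ 2 / 8) / Real.sqrt (2 * Real.pi) * ((5 * x ^ 2 - 4) / (12 * x ^ 2))) x := by
  have hπ : (0:ℝ) < Real.sqrt (2 * Real.pi) :=
    Real.sqrt_pos.2 (by positivity)
  have h1 : HasDerivAt (fun y => stdNormalCDF (y / 2))
      ((Real.sqrt (2 * Real.pi))⁻¹ * Real.exp (-(x / 2) ^ 2 / 2) * (1 / 2)) x :=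
    by have := (cdf_hasDerivAt (x / 2)).comp x ((hasDerivAt_id x).div_const 2); exact this
  have hexp : HasDerivAt (fun y : ℝ => Real.exp (-y ^ 2 / 8))
      (Real.exp (-x ^ 2 / 8) * (-(2 * x ^ 1) / 8)) x :=
    (((hasDerivAt_pow 2 x).neg.div_const 8)).exp
  have hinv : HasDerivAt (fun y : ℝ => 1 / (3 * Real.sqrt (2 * Real.pi) * y))
      (-(3 * Real.sqrt (2 * Real.pi)) / (3 * Real.sqrt (2 * Real.pi) * x) ^ 2) x := by
    have := ((hasDerivAt_id x).const_mul (3 * Real.sqrt (2 * Real.pi))).inv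
      (by simp [hx]; positivity)
    simpa only [one_div, id, Pi.inv_def, mul_one] using this
  have h2 := hinv.mul hexp
  have := h1.add h2
  refine HasDerivAt.congr_deriv this ?_
  have h8 : (-(x/2)^2/2 : ℝ) = -x^2/8 := by ring
  rw [h8]
  field_simp
  ring

lemma c_sq : (2 / Real.sqrt 5) ^ 2 = 4 / 5 := by
  rw [div_pow, Real.sq_sqrt (by norm_num : (5:ℝ) ≥ 0)]
  norm_num

lemma c_pos : (0:ℝ) < 2 / Real.sqrt 5 := by positivity

lemma deriv_hFun (x : ℝ) (hx : x ≠ 0) :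
    deriv hFun x = Real.exp (-x ^ 2 / 8) / Real.sqrt (2 * Real.pi) * ((5 * x ^ 2 - 4) / (12 * x ^ 2)) :=
  (hFun_hasDerivAt x hx).deriv

lemma anti : StrictAntiOn hFun (Set.Ioc 0 (2 / Real.sqrt 5)) := by
  apply strictAntiOn_of_deriv_neg (convex_Ioc _ _)
  · intro y hy
    exact ((hFun_hasDerivAt y (ne_of_gt hy.1)).continuousAt).continuousWithinAt
  · intro y hy
    rw [interior_Ioc] at hy
    rw [deriv_hFun y (ne_of_gt hy.1)]
    have hy2 : y ^ 2 < 4 / 5 := by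
      calc y ^ 2 < (2 / Real.sqrt 5) ^ 2 := by
            apply pow_lt_pow_left₀ hy.2 hy.1.le; norm_num
        _ = 4 / 5 := c_sq
    have h1 : (0:ℝ) < Real.exp (-y ^ 2 / 8) / Real.sqrt (2 * Real.pi) := by positivity
    have h2 : (5 * y ^ 2 - 4) / (12 * y ^ 2) < 0 := by
      apply div_neg_of_neg_of_pos (by linarith)
      have := hy.1; positivity
    exact mul_neg_of_pos_of_neg h1 h2

lemma mono : StrictMonoOn hFun (Set.Ici (2 / Real.sqrt 5)) := by
  apply strictMonoOn_of_deriv_pos (convex_Ici _)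
  · intro y hy
    exact ((hFun_hasDerivAt y (ne_of_gt (lt_of_lt_of_le c_pos hy))).continuousAt).continuousWithinAt
  · intro y hy
    rw [interior_Ici] at hy
    have hy0 : 0 < y := lt_trans c_pos hy
    rw [deriv_hFun y hy0.ne']
    have hy2 : 4 / 5 < y ^ 2 := by
      calc (4:ℝ) / 5 = (2 / Real.sqrt 5) ^ 2 := c_sq.symm
        _ < y ^ 2 := by apply pow_lt_pow_left₀ hy c_pos.le; norm_num
    have h1 : (0:ℝ) < Real.exp (-y ^ 2 / 8) / Real.sqrt (2 * Real.pi) := by positivity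
    exact mul_pos h1 (div_pos (by linarith) (by positivity))

theorem stmt_6 :
    (∀ x : ℝ, 0 < x → x ≠ 2 / Real.sqrt 5 → hFun (2 / Real.sqrt 5) < hFun x) ∧
    hFun (2 / Real.sqrt 5) =
      stdNormalCDF (1 / Real.sqrt 5)
        + (1 / 12) * Real.sqrt (10 / Real.pi) * Real.exp (-1 / 10) := by
  constructor
  · intro x hx hne
    rcases lt_or_gt_of_ne hne with h | h
    · exact anti (Set.mem_Ioc.2 ⟨hx, h.le⟩) (Set.mem_Ioc.2 ⟨c_pos, le_refl _⟩) h
    · exact mono (Set.mem_Ici.2 (le_refl _)) (Set.mem_Ici.2 h.le) h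
  · unfold hFun
    have h5 : Real.sqrt 5 ≠ 0 := by positivity
    have harg : (2 / Real.sqrt 5) / 2 = 1 / Real.sqrt 5 := by ring
    have hexp : -(2 / Real.sqrt 5) ^ 2 / 8 = (-1 : ℝ) / 10 := by
      rw [c_sq]; norm_num
    rw [harg, hexp]
    congr 1
    have hπ : (0:ℝ) < Real.pi := Real.pi_pos
    have : Real.sqrt (2 * Real.pi) = Real.sqrt 2 * Real.sqrt Real.pi :=
      Real.sqrt_mul (by norm_num) _
    rw [this]
    have h10 : Real.sqrt (10 / Real.pi) = Real.sqrt 2 * Real.sqrt 5 / Real.sqrt Real.pi := by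
      rw [show (10:ℝ)/Real.pi = 2*5/Real.pi by norm_num,
        Real.sqrt_div (by positivity), Real.sqrt_mul (by norm_num)]
    rw [h10]
    have hs2 : Real.sqrt 2 * Real.sqrt 2 = 2 := Real.mul_self_sqrt (by norm_num)
    have hπ' : Real.sqrt Real.pi ≠ 0 := by positivity
    have h2' : Real.sqrt 2 ≠ 0 := by positivity
    field_simp
    linear_combination (-6) * hs2
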